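/- Assume conditions (⋆) and (⋆⋆) of Proposition 3, that 1̄ = 1, and that (1, b) ∈ C₁ for every b ∈ B. If (X, ·) is a semigroup (the multiplication is associative), then the involutive-2-link (θ, φ, m : C₂ → C₁) is associative: the pair (m∘φ, m∘θ) is bi-exact and the induced maps m₁, m₂ : C₃ → C₂ (determined by π₁∘m₁ = m∘p₁, π₂∘m₁ = π₂∘p₂, π₁∘m₂ = π₁∘p₁, π₂∘m₂ = m∘p₂, where π₁ = m∘φ, π₂ = m∘θ and p₁, p₂ are the pullback projections of C₃) satisfy m∘m₁ = m∘m₂. -/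

import Mathlib

/-!
Under (⋆⋆) the two legs of the link are `m ∘ φ : (y, x, b) ↦ (y, g x b)` and
`m ∘ θ : (y, x, b) ↦ (x, b)`. Reading `(x, b) ∈ C₁` as an arrow `b ⟶ g x b` of the action
category of `X` on `B`, `C₂` is exactly the set of composable pairs, i.e. the pullback of the
domain and codomain maps `C₁ → B`, both surjective thanks to the identities `(1, b)`. In sets a
pullback of two surjections is also a pushout, which gives both bicartesian squares, and `m`
reassociates composable triples because `(X, ·)` is a semigroup.
-/

universe u

section Link

variable {X B : Type u}

/-- The subset `C₁ = {(x, b) : f(x, b, 1, 0) = x = f(1, 0, x, b)}`. -/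
def linkC1 (f : X → B → X → B → X) (one : X) (zero : B) : Set (X × B) :=
  {p | f p.1 p.2 one zero = p.1 ∧ f one zero p.1 p.2 = p.1}

/-- The subset `C₂ = {(y, x, b) : (y, g(x, b)) ∈ C₁ and (x, b) ∈ C₁}`. -/
def linkC2 (f : X → B → X → B → X) (g : X → B → B) (one : X) (zero : B) :
    Set (X × X × B) :=
  {t | ((t.1, g t.2.1 t.2.2) : X × B) ∈ linkC1 f one zero ∧
    ((t.2.1, t.2.2) : X × B) ∈ linkC1 f one zero}

/-- `m(y, x, b) = (y·x, b)`. -/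
def linkM (mul : X → X → X) : X × X × B → X × B :=
  fun t => (mul t.1 t.2.1, t.2.2)

/-- `θ(y, x, b) = (ȳ, y·x, b)`. -/
def linkθ (mul : X → X → X) (bar : X → X) : X × X × B → X × X × B :=
  fun t => (bar t.1, mul t.1 t.2.1, t.2.2)

/-- `φ(y, x, b) = (y·x, x̄, g(ȳ·(y·x), b))`. -/
def linkφ (mul : X → X → X) (bar : X → X) (g : X → B → B) :
    X × X × B → X × X × B :=
  fun t => (mul t.1 t.2.1, bar t.2.1, g (mul (bar t.1) (mul t.1 t.2.1)) t.2.2)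

section Closure

variable (mul : X → X → X) (one : X) (zero : B) (bar : X → X)
  (f : X → B → X → B → X) (g : X → B → B)

/-- Proposition 2 (well-definedness of `m`): if `(y, x, b) ∈ C₂` then
`(y·x, b) ∈ C₁`. -/
theorem linkM_mem
    (hf : ∀ y x b y' x' b', f (mul y x) b (mul y' x') b' =
      mul (f y (g x b) y' (g x' b')) (f x b x' b'))
    (hg10 : g one zero = zero) (h11 : mul one one = one) :
    ∀ t ∈ linkC2 f g one zero, linkM mul t ∈ linkC1 f one zero := by
  rintro ⟨y, x, b⟩ ⟨⟨h1a, h1b⟩, h2a, h2b⟩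
  constructor
  · show f (mul y x) b one zero = mul y x
    calc f (mul y x) b one zero = f (mul y x) b (mul one one) zero := by rw [h11]
      _ = mul (f y (g x b) one (g one zero)) (f x b one zero) := hf ..
      _ = mul y x := by rw [hg10, h1a, h2a]
  · show f one zero (mul y x) b = mul y x
    calc f one zero (mul y x) b = f (mul one one) zero (mul y x) b := by rw [h11]
      _ = mul (f one (g one zero) y (g x b)) (f one zero x b) := hf ..
      _ = mul y x := by rw [hg10, h1b, h2b]

/-- Closure of `C₂` under `θ`. -/
theorem linkθ_mem
    (hf : ∀ y x b y' x' b', f (mul y x) b (mul y' x') b' =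
      mul (f y (g x b) y' (g x' b')) (f x b x' b'))
    (hg : ∀ y x b, g (mul y x) b = g y (g x b))
    (hg10 : g one zero = zero) (h11 : mul one one = one)
    (hstar : ∀ x b, ((x, b) : X × B) ∈ linkC1 f one zero →
      ((bar x, g x b) : X × B) ∈ linkC1 f one zero) :
    ∀ t ∈ linkC2 f g one zero, linkθ mul bar t ∈ linkC2 f g one zero := by
  rintro ⟨y, x, b⟩ ht
  constructor
  · show ((bar y, g (mul y x) b) : X × B) ∈ linkC1 f one zero
    rw [hg]
    exact hstar y (g x b) ht.1
  · exact linkM_mem mul one zero f g hf hg10 h11 _ ht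

/-- Closure of `C₂` under `φ`. -/
theorem linkφ_mem
    (hf : ∀ y x b y' x' b', f (mul y x) b (mul y' x') b' =
      mul (f y (g x b) y' (g x' b')) (f x b x' b'))
    (hg : ∀ y x b, g (mul y x) b = g y (g x b))
    (hg10 : g one zero = zero) (h11 : mul one one = one)
    (hiv' : ∀ x b, g (mul (bar x) x) b = b)
    (hstar : ∀ x b, ((x, b) : X × B) ∈ linkC1 f one zero →
      ((bar x, g x b) : X × B) ∈ linkC1 f one zero)
    (hcancel : ∀ t ∈ linkC2 f g one zero, mul (bar t.1) (mul t.1 t.2.1) = t.2.1) :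
    ∀ t ∈ linkC2 f g one zero, linkφ mul bar g t ∈ linkC2 f g one zero := by
  rintro ⟨y, x, b⟩ ht
  have hx : mul (bar y) (mul y x) = x := hcancel _ ht
  constructor
  · show ((mul y x, g (bar x) (g (mul (bar y) (mul y x)) b)) : X × B) ∈
      linkC1 f one zero
    rw [hx, ← hg, hiv']
    exact linkM_mem mul one zero f g hf hg10 h11 _ ht
  · show ((bar x, g (mul (bar y) (mul y x)) b) : X × B) ∈ linkC1 f one zero
    rw [hx]
    exact hstar x b ht.2

end Closure

/-- `m` as a map `C₂ → C₁`, given the closure property. -/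
def linkMS {f : X → B → X → B → X} {g : X → B → B} {one : X} {zero : B}
    (mul : X → X → X)
    (hm : ∀ t ∈ linkC2 f g one zero, linkM mul t ∈ linkC1 f one zero) :
    linkC2 f g one zero → linkC1 f one zero :=
  fun t => ⟨linkM mul t.1, hm t.1 t.2⟩

/-- `θ` as a map `C₂ → C₂`, given the closure property. -/
def linkθS {f : X → B → X → B → X} {g : X → B → B} {one : X} {zero : B}
    (mul : X → X → X) (bar : X → X)
    (hθ : ∀ t ∈ linkC2 f g one zero, linkθ mul bar t ∈ linkC2 f g one zero) :
    linkC2 f g one zero → linkC2 f g one zero :=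
  fun t => ⟨linkθ mul bar t.1, hθ t.1 t.2⟩

/-- `φ` as a map `C₂ → C₂`, given the closure property. -/
def linkφS {f : X → B → X → B → X} {g : X → B → B} {one : X} {zero : B}
    (mul : X → X → X) (bar : X → X)
    (hφ : ∀ t ∈ linkC2 f g one zero, linkφ mul bar g t ∈ linkC2 f g one zero) :
    linkC2 f g one zero → linkC2 f g one zero :=
  fun t => ⟨linkφ mul bar g t.1, hφ t.1 t.2⟩

end Link

open CategoryTheory in
/-- A commutative square of types which is both a pullback and a pushout
(an exact / bicartesian / Dolittle / pulation square). -/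
def Bicartesian {P X Y Z : Type u} (fst : P → X) (snd : P → Y)
    (f : X → Z) (g : Y → Z) : Prop :=
  CategoryTheory.IsPullback (C := Type u) (TypeCat.ofHom fst) (TypeCat.ofHom snd)
      (TypeCat.ofHom f) (TypeCat.ofHom g) ∧
    CategoryTheory.IsPushout (C := Type u) (TypeCat.ofHom fst) (TypeCat.ofHom snd)
      (TypeCat.ofHom f) (TypeCat.ofHom g)

/-- A pair of parallel maps is *jointly monomorphic*. -/
def JointlyMono {A B C : Type u} (f : A → B) (g : A → C) : Prop :=
  ∀ a a', f a = f a' → g a = g a' → a = a'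

/-- An involutive-2-link `(θ, φ, m)` is *unital* (Definition 1(1)). -/
def IsUnitalLink {C₂ C₁ : Type u} (θ φ : C₂ → C₂) (m : C₂ → C₁) : Prop :=
  JointlyMono m (m ∘ θ) ∧ JointlyMono m (m ∘ φ) ∧
  ∃ e₁ e₂ : C₁ → C₂,
    m ∘ e₁ = id ∧ m ∘ e₂ = id ∧
    θ ∘ e₂ = e₂ ∧ φ ∘ e₁ = e₁ ∧
    m ∘ θ ∘ φ ∘ e₂ = m ∘ φ ∘ θ ∘ e₁ ∧
    (m ∘ θ ∘ e₁) ∘ (m ∘ φ) = (m ∘ φ ∘ e₂) ∘ (m ∘ θ) ∧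
    (m ∘ θ ∘ e₁) ∘ m = (m ∘ θ ∘ e₁) ∘ (m ∘ θ) ∧
    (m ∘ φ ∘ e₂) ∘ m = (m ∘ φ ∘ e₂) ∘ (m ∘ φ)

/-- An involutive-2-link `(θ, φ, m)` is *associative* (Definition 1(2)). -/
def IsAssociativeLink {C₂ C₁ : Type u} (θ φ : C₂ → C₂) (m : C₂ → C₁) : Prop :=
  ∃ (C₀ : Type u) (d c : C₁ → C₀) (C₃ : Type u) (p₁ p₂ : C₃ → C₂),
    Bicartesian (m ∘ φ) (m ∘ θ) d c ∧
    Bicartesian p₂ p₁ (m ∘ φ) (m ∘ θ) ∧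
    ∃ m₁ m₂ : C₃ → C₂,
      (m ∘ φ) ∘ m₁ = m ∘ p₁ ∧ (m ∘ θ) ∘ m₁ = (m ∘ θ) ∘ p₂ ∧
      (m ∘ φ) ∘ m₂ = (m ∘ φ) ∘ p₁ ∧ (m ∘ θ) ∘ m₂ = m ∘ p₂ ∧
      m ∘ m₁ = m ∘ m₂

/-- The set-theoretic pullback `C₃` of the parallel pair `(π₁, π₂)`
(the object of composable triples). -/
def linkC3 {A C : Type u} (π₁ π₂ : A → C) : Type u :=
  {q : A × A // π₁ q.2 = π₂ q.1}

/-- First projection `p₁ : C₃ → C₂`. -/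
def linkP1 {A C : Type u} (π₁ π₂ : A → C) : linkC3 π₁ π₂ → A := fun q => q.1.1

/-- Second projection `p₂ : C₃ → C₂`. -/
def linkP2 {A C : Type u} (π₁ π₂ : A → C) : linkC3 π₁ π₂ → A := fun q => q.1.2

open CategoryTheory Limits Function

namespace CategoryTheory.Limits.Types

variable {X₁ X₂ X₃ X₄ : Type u} {t : X₁ ⟶ X₂} {l : X₁ ⟶ X₃} {r : X₂ ⟶ X₄} {b : X₃ ⟶ X₄}

lemma surjective_fst_of_isPullback (h : IsPullback t l r b) (hb : Surjective b) :
    Surjective t := fun x₂ => by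
  obtain ⟨x₃, hx₃⟩ := hb (r x₂)
  obtain ⟨x₁, hx₁, -⟩ := exists_of_isPullback h x₂ x₃ hx₃.symm
  exact ⟨x₁, hx₁⟩

/-- Two points of `X₃` with the same image under `b` are linked through `X₁` by a common
preimage in `X₂`; hence the pushout identifies them and is `X₄` itself. -/
lemma isPushout_of_isPullback_of_surjective (h : IsPullback t l r b) (hr : Surjective r)
    (hb : Surjective b) : IsPushout t l r b := by
  have inr_eq (s : PushoutCocone t l) {x₃ y₃ : X₃} (hxy : b x₃ = b y₃) :
      s.inr x₃ = s.inr y₃ := by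
    obtain ⟨x₂, hx₂⟩ := hr (b x₃)
    obtain ⟨x₁, hx₁, rfl⟩ := exists_of_isPullback h x₂ x₃ hx₂
    obtain ⟨y₁, hy₁, rfl⟩ := exists_of_isPullback h x₂ y₃ (hx₂.trans hxy)
    rw [← types_comp_apply l s.inr, ← types_comp_apply l s.inr, ← s.condition,
      types_comp_apply, types_comp_apply, hx₁, hy₁]
  refine IsPushout.of_isColimit' h.toCommSq (PushoutCocone.IsColimit.mk _
    (fun s => TypeCat.ofHom fun x₄ => s.inr (surjInv hb x₄)) (fun s => ?_) (fun s => ?_)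
    (fun s k _ hk => ?_))
  · ext x₂
    obtain ⟨x₁, rfl, hx₁⟩ :=
      exists_of_isPullback h x₂ (surjInv hb (r x₂)) (surjInv_eq hb _).symm
    simpa [← hx₁] using types_congr_hom s.condition.symm x₁
  · ext x₃
    exact inr_eq s (surjInv_eq hb _)
  · ext x₄
    change k x₄ = s.inr (surjInv hb x₄)
    conv_lhs => rw [← surjInv_eq hb x₄]
    rw [← types_comp_apply b k, hk]

end CategoryTheory.Limits.Types

theorem bicartesian_of_isPullback_of_surjective {P X Y Z : Type u} {fst : P → X} {snd : P → Y}
    {f : X → Z} {g : Y → Z}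
    (h : IsPullback (TypeCat.ofHom fst) (TypeCat.ofHom snd) (TypeCat.ofHom f) (TypeCat.ofHom g))
    (hf : Surjective f) (hg : Surjective g) : Bicartesian fst snd f g :=
  ⟨h, Types.isPushout_of_isPullback_of_surjective h hf hg⟩

theorem isPullback_linkC3 {A C : Type u} (π₁ π₂ : A → C) :
    IsPullback (TypeCat.ofHom (linkP2 π₁ π₂)) (TypeCat.ofHom (linkP1 π₁ π₂))
      (TypeCat.ofHom π₁) (TypeCat.ofHom π₂) := by
  rw [Types.isPullback_iff]
  exact ⟨by ext q; exact q.2, fun q q' ⟨h₂, h₁⟩ => Subtype.ext (Prod.ext h₁ h₂),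
    fun a a' h => ⟨⟨(a', a), h⟩, rfl, rfl⟩⟩

theorem isAssociativeLink_of_isPullback {C₀ C₁ C₂ : Type u} {θ φ : C₂ → C₂} {m : C₂ → C₁}
    {d c : C₁ → C₀}
    (h : IsPullback (TypeCat.ofHom (m ∘ φ)) (TypeCat.ofHom (m ∘ θ))
      (TypeCat.ofHom d) (TypeCat.ofHom c))
    (hd : Surjective d) (hc : Surjective c)
    (hassoc : ∀ u v : C₂, m (φ v) = m (θ u) → ∃ w₁ w₂ : C₂,
      m (φ w₁) = m u ∧ m (θ w₁) = m (θ v) ∧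
      m (φ w₂) = m (φ u) ∧ m (θ w₂) = m v ∧ m w₁ = m w₂) :
    IsAssociativeLink θ φ m := by
  choose w₁ w₂ hw₁φ hw₁θ hw₂φ hw₂θ hw using hassoc
  have hπ₁ : Surjective (m ∘ φ) := Types.surjective_fst_of_isPullback h hc
  have hπ₂ : Surjective (m ∘ θ) := Types.surjective_fst_of_isPullback h.flip hd
  refine ⟨C₀, d, c, linkC3 (m ∘ φ) (m ∘ θ), linkP1 _ _, linkP2 _ _,
    bicartesian_of_isPullback_of_surjective h hd hc,
    bicartesian_of_isPullback_of_surjective (isPullback_linkC3 _ _) hπ₁ hπ₂,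
    fun q => w₁ _ _ q.2, fun q => w₂ _ _ q.2, funext fun q => hw₁φ _ _ q.2,
    funext fun q => hw₁θ _ _ q.2, funext fun q => hw₂φ _ _ q.2, funext fun q => hw₂θ _ _ q.2,
    funext fun q => hw _ _ q.2⟩

section Link

variable {X B : Type u} {mul : X → X → X} {one : X} {zero : B} {bar : X → X}
  {f : X → B → X → B → X} {g : X → B → B}

def linkDom : linkC1 f one zero → B := fun u => u.1.2

def linkCod (g : X → B → B) : linkC1 f one zero → B := fun u => g u.1.1 u.1.2

theorem linkDom_surjective (h1 : ∀ b, ((one, b) : X × B) ∈ linkC1 f one zero) :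
    Surjective (linkDom : linkC1 f one zero → B) :=
  fun b => ⟨⟨(one, b), h1 b⟩, rfl⟩

theorem linkCod_surjective (h1 : ∀ b, ((one, b) : X × B) ∈ linkC1 f one zero)
    (hg1 : ∀ b, g one b = b) : Surjective (linkCod g : linkC1 f one zero → B) :=
  fun b => ⟨⟨(one, b), h1 b⟩, hg1 b⟩

theorem linkMS_linkφS
    {hm : ∀ t ∈ linkC2 f g one zero, linkM mul t ∈ linkC1 f one zero}
    {hφ : ∀ t ∈ linkC2 f g one zero, linkφ mul bar g t ∈ linkC2 f g one zero}
    (hleft : ∀ t ∈ linkC2 f g one zero, mul (bar t.1) (mul t.1 t.2.1) = t.2.1)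
    (hright : ∀ t ∈ linkC2 f g one zero, mul (mul t.1 t.2.1) (bar t.2.1) = t.1)
    (t : linkC2 f g one zero) :
    linkMS mul hm (linkφS mul bar hφ t) = ⟨(t.1.1, g t.1.2.1 t.1.2.2), t.2.1⟩ :=
  Subtype.ext (Prod.ext (hright t.1 t.2) (congrArg (g · t.1.2.2) (hleft t.1 t.2)))

theorem linkMS_linkθS
    {hm : ∀ t ∈ linkC2 f g one zero, linkM mul t ∈ linkC1 f one zero}
    {hθ : ∀ t ∈ linkC2 f g one zero, linkθ mul bar t ∈ linkC2 f g one zero}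
    (hleft : ∀ t ∈ linkC2 f g one zero, mul (bar t.1) (mul t.1 t.2.1) = t.2.1)
    (t : linkC2 f g one zero) :
    linkMS mul hm (linkθS mul bar hθ t) = ⟨(t.1.2.1, t.1.2.2), t.2.2⟩ :=
  Subtype.ext (Prod.ext (hleft t.1 t.2) rfl)

theorem isPullback_linkDom_linkCod
    {hm : ∀ t ∈ linkC2 f g one zero, linkM mul t ∈ linkC1 f one zero}
    {hθ : ∀ t ∈ linkC2 f g one zero, linkθ mul bar t ∈ linkC2 f g one zero}
    {hφ : ∀ t ∈ linkC2 f g one zero, linkφ mul bar g t ∈ linkC2 f g one zero}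
    (hleft : ∀ t ∈ linkC2 f g one zero, mul (bar t.1) (mul t.1 t.2.1) = t.2.1)
    (hright : ∀ t ∈ linkC2 f g one zero, mul (mul t.1 t.2.1) (bar t.2.1) = t.1) :
    IsPullback (TypeCat.ofHom (linkMS mul hm ∘ linkφS mul bar hφ))
      (TypeCat.ofHom (linkMS mul hm ∘ linkθS mul bar hθ))
      (TypeCat.ofHom linkDom) (TypeCat.ofHom (linkCod g)) := by
  rw [Types.isPullback_iff]
  refine ⟨?_, ?_, ?_⟩
  · ext t
    simp [linkMS_linkφS hleft hright, linkMS_linkθS hleft, linkDom, linkCod]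
  · rintro t t' ⟨h₁, h₂⟩
    simp only [TypeCat.ofHom_apply, comp_apply, linkMS_linkφS hleft hright, linkMS_linkθS hleft,
      Subtype.mk.injEq, Prod.mk.injEq] at h₁ h₂
    exact Subtype.ext (Prod.ext h₁.1 (Prod.ext h₂.1 h₂.2))
  · rintro u v (h : u.1.2 = g v.1.1 v.1.2)
    refine ⟨⟨(u.1.1, v.1.1, v.1.2), h ▸ u.2, v.2⟩, ?_, ?_⟩ <;>
      simp [linkMS_linkφS hleft hright, linkMS_linkθS hleft, ← h]

theorem exists_reassoc_of_composable
    {hm : ∀ t ∈ linkC2 f g one zero, linkM mul t ∈ linkC1 f one zero}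
    {hθ : ∀ t ∈ linkC2 f g one zero, linkθ mul bar t ∈ linkC2 f g one zero}
    {hφ : ∀ t ∈ linkC2 f g one zero, linkφ mul bar g t ∈ linkC2 f g one zero}
    (hg : ∀ y x b, g (mul y x) b = g y (g x b))
    (hassoc : ∀ a b c : X, mul (mul a b) c = mul a (mul b c))
    (hleft : ∀ t ∈ linkC2 f g one zero, mul (bar t.1) (mul t.1 t.2.1) = t.2.1)
    (hright : ∀ t ∈ linkC2 f g one zero, mul (mul t.1 t.2.1) (bar t.2.1) = t.1)
    (u v : linkC2 f g one zero)
    (huv : linkMS mul hm (linkφS mul bar hφ v) = linkMS mul hm (linkθS mul bar hθ u)) :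
    ∃ w₁ w₂ : linkC2 f g one zero,
      linkMS mul hm (linkφS mul bar hφ w₁) = linkMS mul hm u ∧
      linkMS mul hm (linkθS mul bar hθ w₁) = linkMS mul hm (linkθS mul bar hθ v) ∧
      linkMS mul hm (linkφS mul bar hφ w₂) = linkMS mul hm (linkφS mul bar hφ u) ∧
      linkMS mul hm (linkθS mul bar hθ w₂) = linkMS mul hm v ∧
      linkMS mul hm w₁ = linkMS mul hm w₂ := by
  obtain ⟨⟨y, x', b'⟩, hu⟩ := u
  obtain ⟨⟨x, w, b⟩, hv⟩ := v
  simp only [linkMS_linkφS hleft hright, linkMS_linkθS hleft, Subtype.mk.injEq,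
    Prod.mk.injEq] at huv
  obtain ⟨rfl, rfl⟩ := huv
  have hyxw : ((y, g (mul x w) b) : X × B) ∈ linkC1 f one zero := by
    rw [hg]
    exact hu.1
  refine ⟨⟨(mul y x, w, b), hm _ hu, hv.2⟩, ⟨(y, mul x w, b), hyxw, hm _ hv⟩, ?_⟩
  simp only [linkMS_linkφS hleft hright, linkMS_linkθS hleft, hg, true_and]
  exact ⟨rfl, rfl, Subtype.ext (Prod.ext (hassoc y x w) rfl)⟩

end Link

theorem link_associative_of_semigroup_general {X B : Type u} (mul : X → X → X)
    (one : X) (zero : B) (bar : X → X) (f : X → B → X → B → X) (g : X → B → B)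
    (hg : ∀ y x b, g (mul y x) b = g y (g x b))
    (h11 : mul one one = one)
    (hiv' : ∀ x b, g (mul (bar x) x) b = b)
    (hstarstar : ∀ t ∈ linkC2 f g one zero,
      mul (bar t.1) (mul t.1 t.2.1) = t.2.1 ∧
      mul (mul t.1 t.2.1) (bar t.2.1) = t.1 ∧
      mul t.2.1 (bar (mul t.1 t.2.1)) = bar t.1 ∧
      mul (bar (mul t.1 t.2.1)) t.1 = bar t.2.1)
    (hbar1 : bar one = one)
    (h1b : ∀ b, ((one, b) : X × B) ∈ linkC1 f one zero)
    (hassoc : ∀ a b c : X, mul (mul a b) c = mul a (mul b c)) :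
    ∀ (hm : ∀ t ∈ linkC2 f g one zero, linkM mul t ∈ linkC1 f one zero)
      (hθc : ∀ t ∈ linkC2 f g one zero, linkθ mul bar t ∈ linkC2 f g one zero)
      (hφc : ∀ t ∈ linkC2 f g one zero, linkφ mul bar g t ∈ linkC2 f g one zero),
      IsAssociativeLink (linkθS mul bar hθc) (linkφS mul bar hφc)
        (linkMS mul hm) := by
  intro hm hθc hφc
  have hleft : ∀ t ∈ linkC2 f g one zero, mul (bar t.1) (mul t.1 t.2.1) = t.2.1 :=
    fun t ht => (hstarstar t ht).1
  have hright : ∀ t ∈ linkC2 f g one zero, mul (mul t.1 t.2.1) (bar t.2.1) = t.1 :=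
    fun t ht => (hstarstar t ht).2.1
  have hg1 : ∀ b, g one b = b := fun b => by simpa [hbar1, h11] using hiv' one b
  exact isAssociativeLink_of_isPullback (isPullback_linkDom_linkCod hleft hright)
    (linkDom_surjective h1b) (linkCod_surjective h1b hg1)
    (exists_reassoc_of_composable hg hassoc hleft hright)

/-- **Proposition 4** (second part). Assuming (⋆), (⋆⋆), `1̄ = 1`,
`(1, b) ∈ C₁` for every `b`, and that `(X, ·)` is a semigroup, the triple
`(θ, φ, m : C₂ → C₁)` is an associative involutive-2-link. -/
theorem link_associative_of_semigroup {X B : Type u} (mul : X → X → X)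
    (one : X) (zero : B) (bar : X → X) (f : X → B → X → B → X) (g : X → B → B)
    (hf : ∀ y x b y' x' b', f (mul y x) b (mul y' x') b' =
      mul (f y (g x b) y' (g x' b')) (f x b x' b'))
    (hg : ∀ y x b, g (mul y x) b = g y (g x b))
    (hg10 : g one zero = zero) (h11 : mul one one = one)
    (hiv : ∀ x y b, g (mul (bar x) (mul (bar y) (mul y x))) b = b)
    (hiv' : ∀ x b, g (mul (bar x) x) b = b)
    (hstar : ∀ x b, ((x, b) : X × B) ∈ linkC1 f one zero →
      ((bar x, g x b) : X × B) ∈ linkC1 f one zero ∧ bar (bar x) = x)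
    (hstarstar : ∀ t ∈ linkC2 f g one zero,
      mul (bar t.1) (mul t.1 t.2.1) = t.2.1 ∧
      mul (mul t.1 t.2.1) (bar t.2.1) = t.1 ∧
      mul t.2.1 (bar (mul t.1 t.2.1)) = bar t.1 ∧
      mul (bar (mul t.1 t.2.1)) t.1 = bar t.2.1)
    (hbar1 : bar one = one)
    (h1b : ∀ b, ((one, b) : X × B) ∈ linkC1 f one zero)
    (hassoc : ∀ a b c : X, mul (mul a b) c = mul a (mul b c)) :
    ∀ (hm : ∀ t ∈ linkC2 f g one zero, linkM mul t ∈ linkC1 f one zero)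
      (hθc : ∀ t ∈ linkC2 f g one zero, linkθ mul bar t ∈ linkC2 f g one zero)
      (hφc : ∀ t ∈ linkC2 f g one zero, linkφ mul bar g t ∈ linkC2 f g one zero),
      IsAssociativeLink (linkθS mul bar hθc) (linkφS mul bar hφc)
        (linkMS mul hm) :=
  link_associative_of_semigroup_general mul one zero bar f g hg h11 hiv' hstarstar hbar1 h1b hassoc
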